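/- arXiv:2605.00442 — 3 statements merged into one kernel-verified Lean document; each statement's English description precedes it below -/
import Mathlib

section
/- Let N > 1 be a natural number, M₁ = N + 2, r < 0, k ∈ (-1/M₁, 1/M₁), 0 < k₁ < 1, and k₂ ≥ 4π. Define F(x) = x²e^{r-x} + k₀ + k·x·cos(πk₁x/(1+k₂)) - x. Then F'(x) < 0 for all x ∈ [0, M₁]. -/
/-!
Differentiating, `F' x = (2 - x) x e^(r - x) + k cos (a x) - k x a sin (a x) - 1` with
`a = π k₁ / (1 + k₂) < 1/4`. On `[0, M₁]` the three non-constant terms are at most `1/2`, `|k| < 1/4`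
and `|k| M₁ a < 1/4` respectively, so `F' x < 0`.
-/

open Real

theorem hasDerivAt_sq_mul_exp_add_mul_cos (r k₀ k a x : ℝ) :
    HasDerivAt (fun x => x ^ 2 * exp (r - x) + k₀ + k * x * cos (a * x) - x)
      ((2 - x) * x * exp (r - x) + k * cos (a * x) - k * x * a * sin (a * x) - 1) x := by
  refine (((((hasDerivAt_pow 2 x).mul ((hasDerivAt_id' x).const_sub r).exp).add_const k₀).add
    (((hasDerivAt_id' x).const_mul k).mul ((hasDerivAt_id' x).const_mul a).cos)).sub
    (hasDerivAt_id' x)).congr_deriv ?_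
  norm_num
  ring

/-- The bound `(2 - x) x ≤ (1 + x / 2)² / 2` is `(3x/2 - 1)² ≥ 0`, and `(1 + x / 2)² ≤ eˣ`. -/
theorem two_sub_mul_mul_exp_sub_le_half {r : ℝ} (hr : r ≤ 0) (x : ℝ) :
    (2 - x) * x * exp (r - x) ≤ 1 / 2 := by
  rcases le_or_gt ((2 - x) * x) 0 with hneg | hpos
  · nlinarith [exp_pos (r - x)]
  have hx : 0 < x := by nlinarith
  have hexp : (1 + x / 2) ^ 2 ≤ exp x := by
    calc (1 + x / 2) ^ 2 ≤ exp (x / 2) ^ 2 := by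
          gcongr
          linarith [add_one_le_exp (x / 2)]
      _ = exp x := by rw [← exp_nat_mul]; ring_nf
  calc (2 - x) * x * exp (r - x) ≤ (2 - x) * x * exp (-x) := by gcongr; linarith
    _ = (2 - x) * x / exp x := by rw [exp_neg, div_eq_mul_inv]
    _ ≤ (2 - x) * x / (1 + x / 2) ^ 2 := div_le_div_of_nonneg_left hpos.le (by positivity) hexp
    _ ≤ 1 / 2 := by
      rw [div_le_iff₀ (by positivity)]
      nlinarith [sq_nonneg (3 * x - 2)]

theorem neg_mul_mul_mul_sin_le {k x a M : ℝ} (hkM : |k| * M ≤ 1) (hx : x ∈ Set.Icc 0 M)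
    (ha : 0 ≤ a) : -(k * x * a * sin (a * x)) ≤ a := by
  have hkx : |k| * x ≤ 1 := (mul_le_mul_of_nonneg_left hx.2 (abs_nonneg k)).trans hkM
  calc -(k * x * a * sin (a * x)) ≤ |k * x * a * sin (a * x)| := neg_le_abs _
    _ = |k| * x * a * |sin (a * x)| := by
        rw [abs_mul, abs_mul, abs_mul, abs_of_nonneg hx.1, abs_of_nonneg ha]
    _ ≤ 1 * a * 1 := by gcongr; exact abs_sin_le_one _
    _ = a := by ring

theorem stmt2 (N : ℕ) (hN : 1 < N) (M₁ r k₀ k k₁ k₂ : ℝ)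
    (hM₁ : M₁ = (N : ℝ) + 2) (hr : r < 0)
    (hk : -1 / M₁ < k ∧ k < 1 / M₁) (hk₁ : 0 < k₁ ∧ k₁ < 1) (hk₂ : k₂ ≥ 4 * π)
    (F : ℝ → ℝ)
    (hF : ∀ x, F x = x ^ 2 * exp (r - x) + k₀ + k * x * cos (π * k₁ * x / (1 + k₂)) - x) :
    ∀ x ∈ Set.Icc (0 : ℝ) M₁, deriv F x < 0 := by
  intro x hx
  set a := π * k₁ / (1 + k₂)
  have hFa : F = fun x => x ^ 2 * exp (r - x) + k₀ + k * x * cos (a * x) - x := by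
    funext y
    rw [hF, div_mul_eq_mul_div]
  rw [hFa, (hasDerivAt_sq_mul_exp_add_mul_cos r k₀ k a x).deriv]
  have hM₁4 : 4 ≤ M₁ := by
    have : (2 : ℝ) ≤ N := by exact_mod_cast hN
    linarith
  have hkM : |k| * M₁ < 1 := by
    rw [← lt_div_iff₀ (by linarith)]
    exact abs_lt.2 ⟨by rw [← neg_div]; exact hk.1, hk.2⟩
  have ha : 0 < a ∧ a < 1 / 4 := by
    have hk₂pos : 0 < 1 + k₂ := by linarith [pi_pos]
    refine ⟨div_pos (mul_pos pi_pos hk₁.1) hk₂pos, ?_⟩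
    rw [div_lt_iff₀ hk₂pos]
    nlinarith [pi_pos]
  have hcos : k * cos (a * x) < 1 / 4 :=
    calc k * cos (a * x) ≤ |k| * |cos (a * x)| := abs_mul k _ ▸ le_abs_self _
      _ ≤ |k| := mul_le_of_le_one_right (abs_nonneg k) (abs_cos_le_one _)
      _ < 1 / 4 := by nlinarith [abs_nonneg k]
  linarith [two_sub_mul_mul_exp_sub_le_half hr.le x, neg_mul_mul_mul_sin_le hkM.le hx ha.1.le]
end

section
/- Let N > 1 be a natural number, M₁ = N + 2, 0 < k₀ < N, r < 0, k ∈ (-1/M₁, 1/M₁), 0 < k₁ < 1, and k₂ ≥ 4π. Then the function F(x) = x²e^{r-x} + k₀ + k·x·cos(πk₁x/(1+k₂)) - x has exactly one root in the interval [0, M₁]. -/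
/-! With `θ = π k₁ / (1 + k₂)`, `F(0) = k₀ > 0`, and `F(M₁) < 1 + k₀ + 1 - M₁ < 0`
because `M₁² < e^{M₁}` and `|k| M₁ < 1`. On `[0, M₁]` the derivative
`(2x - x²) e^{r-x} + k cos(θx) - kxθ sin(θx) - 1` is negative: the three terms are below
`1/2`, `1/4` (as `M₁ ≥ 4`) and `|θ| < 1/4` (as `k₂ ≥ 4π`). So `F` has a root by the
intermediate value theorem, and only one since it is strictly decreasing. -/

open Real Set

theorem sq_lt_exp {x : ℝ} (hx : 0 ≤ x) : x ^ 2 < exp x := by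
  have hhalf : x < exp (x / 2) := by
    nlinarith [quadratic_le_exp_of_nonneg (div_nonneg hx zero_le_two), sq_nonneg (x / 2 - 2)]
  calc x ^ 2 < exp (x / 2) ^ 2 := by gcongr
    _ = exp x := by rw [← exp_nat_mul]; ring_nf

theorem two_mul_two_mul_sub_sq_lt_exp (x : ℝ) : 2 * (2 * x - x ^ 2) < exp x := by
  rcases le_or_gt 0 x with hx | hx
  · nlinarith [quadratic_le_exp_of_nonneg hx, sq_nonneg (x - 3 / 5)]
  · nlinarith [exp_pos x]

theorem existsUnique_mem_Icc_eq_zero_of_strictAntiOn {f : ℝ → ℝ} {a b : ℝ} (hab : a ≤ b)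
    (hf : ContinuousOn f (Icc a b)) (hanti : StrictAntiOn f (Icc a b))
    (ha : 0 ≤ f a) (hb : f b ≤ 0) : ∃! x, x ∈ Icc a b ∧ f x = 0 := by
  obtain ⟨c, hc, hfc⟩ := intermediate_value_Icc' hab hf ⟨hb, ha⟩
  exact ⟨c, ⟨hc, hfc⟩, fun y hy => hanti.injOn hy.1 hc (hy.2.trans hfc.symm)⟩

/-- The `x`-coordinate equation of a fixed point of the memristive reduced Chialvo map:
`φ = k₁ x / (1 + k₂)` from the second component, substituted into the first, `θ = π k₁ / (1 + k₂)`. -/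
noncomputable def chialvoFixedPointResidual (r k₀ k θ x : ℝ) : ℝ :=
  x ^ 2 * exp (r - x) + k₀ + k * x * cos (θ * x) - x

section
variable {r k₀ k θ : ℝ}

theorem hasDerivAt_chialvoFixedPointResidual (x : ℝ) :
    HasDerivAt (chialvoFixedPointResidual r k₀ k θ)
      ((2 * x - x ^ 2) * exp (r - x) + k * cos (θ * x) - k * x * (θ * sin (θ * x)) - 1) x := by
  have hexp : HasDerivAt (fun x => exp (r - x)) (-exp (r - x)) x := by
    simpa using ((hasDerivAt_id x).const_sub r).exp
  have hcos : HasDerivAt (fun x => cos (θ * x)) (-(θ * sin (θ * x))) x := by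
    simpa [mul_comm] using ((hasDerivAt_id x).const_mul θ).cos
  refine (((((hasDerivAt_pow 2 x).mul hexp).add_const k₀).add
    (((hasDerivAt_id' x).const_mul k).mul hcos)).sub (hasDerivAt_id' x)).congr_deriv ?_
  ring

theorem deriv_chialvoFixedPointResidual_neg {x : ℝ} (hr : r ≤ 0) (hk : |k| ≤ 1 / 4)
    (hkx : |k * x| ≤ 1) (hθ : |θ| < 1 / 4) :
    (2 * x - x ^ 2) * exp (r - x) + k * cos (θ * x) - k * x * (θ * sin (θ * x)) - 1 < 0 := by
  have hquad : (2 * x - x ^ 2) * exp (r - x) < 1 / 2 := by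
    calc (2 * x - x ^ 2) * exp (r - x) < exp x / 2 * exp (r - x) := by
          gcongr; linarith [two_mul_two_mul_sub_sq_lt_exp x]
      _ = exp r / 2 := by rw [div_mul_eq_mul_div, ← exp_add]; ring_nf
      _ ≤ 1 / 2 := by gcongr; exact exp_le_one_iff.mpr hr
  have hcos : k * cos (θ * x) ≤ 1 / 4 := by
    calc k * cos (θ * x) ≤ |k| * |cos (θ * x)| := by rw [← abs_mul]; exact le_abs_self _
      _ ≤ 1 / 4 * 1 := by gcongr; exact abs_cos_le_one _
      _ = 1 / 4 := by ring
  have hsin : -(k * x * (θ * sin (θ * x))) < 1 / 4 := by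
    calc -(k * x * (θ * sin (θ * x))) ≤ |k * x| * (|θ| * |sin (θ * x)|) := by
          rw [← abs_mul, ← abs_mul]; exact neg_le_abs _
      _ ≤ 1 * (|θ| * 1) := by gcongr; exact abs_sin_le_one _
      _ < 1 / 4 := by linarith
  linarith

theorem continuous_chialvoFixedPointResidual : Continuous (chialvoFixedPointResidual r k₀ k θ) :=
  continuous_iff_continuousAt.mpr fun x => hasDerivAt_chialvoFixedPointResidual x |>.continuousAt

theorem strictAntiOn_chialvoFixedPointResidual {M : ℝ} (hr : r ≤ 0) (hM : 4 ≤ M)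
    (hk : |k| * M ≤ 1) (hθ : |θ| < 1 / 4) :
    StrictAntiOn (chialvoFixedPointResidual r k₀ k θ) (Icc 0 M) := by
  refine strictAntiOn_of_deriv_neg (convex_Icc 0 M)
    continuous_chialvoFixedPointResidual.continuousOn fun x hx => ?_
  rw [interior_Icc] at hx
  rw [(hasDerivAt_chialvoFixedPointResidual x).deriv]
  refine deriv_chialvoFixedPointResidual_neg hr (by nlinarith [abs_nonneg k]) ?_ hθ
  calc |k * x| = |k| * x := by rw [abs_mul, abs_of_pos hx.1]
    _ ≤ |k| * M := by gcongr; exact hx.2.le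
    _ ≤ 1 := hk

@[simp]
theorem chialvoFixedPointResidual_zero : chialvoFixedPointResidual r k₀ k θ 0 = k₀ := by
  simp [chialvoFixedPointResidual]

theorem chialvoFixedPointResidual_neg {M : ℝ} (hr : r ≤ 0) (hM : 0 ≤ M)
    (hk : |k| * M ≤ 1) (hk₀ : k₀ + 2 ≤ M) : chialvoFixedPointResidual r k₀ k θ M < 0 := by
  have hexp : M ^ 2 * exp (r - M) < 1 := by
    calc M ^ 2 * exp (r - M) < exp M * exp (r - M) := by gcongr; exact sq_lt_exp hM
      _ = exp r := by rw [← exp_add]; ring_nf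
      _ ≤ 1 := exp_le_one_iff.mpr hr
  have hcos : k * M * cos (θ * M) ≤ 1 := by
    calc k * M * cos (θ * M) ≤ |k| * M * |cos (θ * M)| := by
          rw [← abs_of_nonneg hM, ← abs_mul, ← abs_mul, abs_of_nonneg hM]; exact le_abs_self _
      _ ≤ 1 * 1 := by gcongr; exact abs_cos_le_one _
      _ = 1 := one_mul 1
  unfold chialvoFixedPointResidual
  linarith

end

theorem stmt3 (N : ℕ) (hN : 1 < N) (M₁ r k₀ k k₁ k₂ : ℝ)
    (hM₁ : M₁ = (N : ℝ) + 2) (hk₀ : 0 < k₀ ∧ k₀ < N) (hr : r < 0)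
    (hk : -1 / M₁ < k ∧ k < 1 / M₁) (hk₁ : 0 < k₁ ∧ k₁ < 1) (hk₂ : k₂ ≥ 4 * π)
    (F : ℝ → ℝ)
    (hF : ∀ x, F x = x ^ 2 * exp (r - x) + k₀ + k * x * cos (π * k₁ * x / (1 + k₂)) - x) :
    ∃! x, x ∈ Set.Icc (0 : ℝ) M₁ ∧ F x = 0 := by
  set θ := π * k₁ / (1 + k₂)
  have hF_eq : F = chialvoFixedPointResidual r k₀ k θ := by
    ext x; rw [hF, chialvoFixedPointResidual, mul_div_right_comm]
  have hM : 4 ≤ M₁ := by rw [hM₁]; linarith [show (2 : ℝ) ≤ N by exact_mod_cast hN]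
  have hkM : |k| * M₁ ≤ 1 := by
    rw [← le_div_iff₀ (by linarith), abs_le, ← neg_div]; exact ⟨hk.1.le, hk.2.le⟩
  have hθ : |θ| < 1 / 4 := by
    have hk₂_pos : 0 < 1 + k₂ := by linarith [pi_pos]
    rw [abs_of_pos (div_pos (mul_pos pi_pos hk₁.1) hk₂_pos), div_lt_iff₀ hk₂_pos]
    nlinarith [pi_pos]
  rw [hF_eq]
  refine existsUnique_mem_Icc_eq_zero_of_strictAntiOn (by linarith)
    continuous_chialvoFixedPointResidual.continuousOn
    (strictAntiOn_chialvoFixedPointResidual hr.le hM hkM hθ) (by simpa using hk₀.1.le)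
    (chialvoFixedPointResidual_neg hr.le (by linarith) hkM (by rw [hM₁]; linarith)).le
end

section
/- Let N > 1, M₁ = N + 2, M₂ = k₁M₁/(1+k₂), 0 < k₀ < N, r < 0, k ∈ (-1/M₁, 1/M₁), 0 < k₁ < 1, and k₂ ≥ 4π. Then the map M_{r,k}(x,φ) = (x²e^{r-x} + k₀ + kx cos(πφ), k₁x - k₂φ) has a unique fixed point (x*, φ*) in [0, M₁] × [0, M₂] with x* > 0. -/
/-!
Every fixed point has `φ = k₁ x / (1 + k₂)`, so the fixed points correspond to the zeros of the
one-variable function `g x = x² e^{r-x} + k₀ + k x cos (c x) - x` with `c = π k₁ / (1 + k₂) < 1/4`.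
Since `(2x - x²) e^{r-x} ≤ 1/2`, `|k| ≤ 1/4` and `|k| x c ≤ c` on `[0, M₁]`, the derivative of `g`
is negative there, and `g 0 = k₀ > 0 > g M₁`; the intermediate value theorem gives exactly one zero,
and it is positive.
-/

open Real Set

namespace Real

lemma sq_lt_exp {x : ℝ} (hx : 0 ≤ x) : x ^ 2 < exp x := by
  have h := sum_le_exp_of_nonneg hx 4
  simp only [Finset.sum_range_succ, Finset.sum_range_zero, Nat.factorial] at h
  push_cast at h
  nlinarith [sq_nonneg (x - 3 / 2)]

lemma sq_mul_exp_sub_lt_one {r x : ℝ} (hr : r ≤ 0) (hx : 0 ≤ x) : x ^ 2 * exp (r - x) < 1 := by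
  rw [exp_sub, mul_div_assoc', div_lt_one (exp_pos x)]
  calc x ^ 2 * exp r ≤ x ^ 2 := mul_le_of_le_one_right (sq_nonneg x) (exp_le_one_iff.2 hr)
    _ < exp x := sq_lt_exp hx

lemma two_mul_sub_sq_mul_exp_sub_le {r : ℝ} (hr : r ≤ 0) (x : ℝ) :
    (2 * x - x ^ 2) * exp (r - x) ≤ 1 / 2 := by
  rcases le_or_gt (2 * x - x ^ 2) 0 with hneg | hpos
  · linarith [mul_nonpos_of_nonpos_of_nonneg hneg (exp_pos (r - x)).le]
  have hx : 0 ≤ x := by nlinarith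
  rw [exp_sub, mul_div_assoc', div_le_iff₀ (exp_pos x)]
  calc (2 * x - x ^ 2) * exp r ≤ 2 * x - x ^ 2 :=
        mul_le_of_le_one_right hpos.le (exp_le_one_iff.2 hr)
    _ ≤ 1 / 2 * (1 + x + x ^ 2 / 2) := by nlinarith [sq_nonneg (x - 3 / 5)]
    _ ≤ 1 / 2 * exp x := by gcongr; exact quadratic_le_exp_of_nonneg hx

end Real

lemma StrictAntiOn.existsUnique_eq_zero_Icc {f : ℝ → ℝ} {a b : ℝ} (hab : a ≤ b)
    (hf : ContinuousOn f (Icc a b)) (h : StrictAntiOn f (Icc a b)) (ha : 0 ≤ f a)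
    (hb : f b ≤ 0) : ∃! x, x ∈ Icc a b ∧ f x = 0 := by
  obtain ⟨x, hx, hfx⟩ := intermediate_value_Icc' hab hf ⟨hb, ha⟩
  exact ⟨x, ⟨hx, hfx⟩, fun y ⟨hy, hfy⟩ => h.injOn hy hx (hfy.trans hfx.symm)⟩

/-- Substituting `φ = k₁ x / (1 + k₂)` into the first fixed-point equation, with
`c = π k₁ / (1 + k₂)`. -/
noncomputable def fixedPointResidual (r k₀ k c x : ℝ) : ℝ :=
  x ^ 2 * exp (r - x) + k₀ + k * x * cos (c * x) - x

namespace fixedPointResidual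

variable {r k₀ k c : ℝ}

lemma apply_zero : fixedPointResidual r k₀ k c 0 = k₀ := by simp [fixedPointResidual]

lemma hasDerivAt (x : ℝ) :
    HasDerivAt (fixedPointResidual r k₀ k c)
      ((2 * x - x ^ 2) * exp (r - x) + k * (cos (c * x) - c * x * sin (c * x)) - 1) x := by
  have h := ((((hasDerivAt_pow 2 x).mul ((hasDerivAt_id x).const_sub r).exp).add_const k₀).add
    (((hasDerivAt_id x).const_mul k).mul ((hasDerivAt_id x).const_mul c).cos)).sub
    (hasDerivAt_id x)
  exact h.congr_deriv (by simp only [id]; ring)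

lemma deriv_neg (hr : r ≤ 0) (hc₀ : 0 ≤ c) (hc : c < 1 / 4) (hk : |k| ≤ 1 / 4) {x : ℝ}
    (hx : 0 ≤ x) (hkx : |k| * x ≤ 1) :
    (2 * x - x ^ 2) * exp (r - x) + k * (cos (c * x) - c * x * sin (c * x)) - 1 < 0 := by
  have hcos : k * cos (c * x) ≤ |k| := by
    calc k * cos (c * x) ≤ |k * cos (c * x)| := le_abs_self _
      _ = |k| * |cos (c * x)| := abs_mul _ _
      _ ≤ |k| := mul_le_of_le_one_right (abs_nonneg k) (abs_cos_le_one _)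
  have hsin : -(k * (c * x * sin (c * x))) ≤ c := by
    calc -(k * (c * x * sin (c * x))) ≤ |k * (c * x * sin (c * x))| := neg_le_abs _
      _ = c * (|k| * x) * |sin (c * x)| := by
        rw [abs_mul, abs_mul, abs_mul, abs_of_nonneg hc₀, abs_of_nonneg hx]; ring
      _ ≤ c * 1 * 1 := by gcongr; exact abs_sin_le_one _
      _ = c := by ring
  linarith [two_mul_sub_sq_mul_exp_sub_le hr x]

lemma strictAntiOn (hr : r ≤ 0) (hc₀ : 0 ≤ c) (hc : c < 1 / 4) {L : ℝ} (hL : 4 ≤ L)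
    (hkL : |k| * L ≤ 1) : StrictAntiOn (fixedPointResidual r k₀ k c) (Icc 0 L) := by
  have hk : |k| ≤ 1 / 4 := by nlinarith [abs_nonneg k]
  refine strictAntiOn_of_deriv_neg (convex_Icc 0 L)
    (fun x _ => (hasDerivAt x).continuousAt.continuousWithinAt) fun x hx => ?_
  rw [interior_Icc] at hx
  rw [(hasDerivAt x).deriv]
  exact deriv_neg hr hc₀ hc hk hx.1.le
    (le_trans (mul_le_mul_of_nonneg_left hx.2.le (abs_nonneg k)) hkL)

lemma neg_of_add_two_le (hr : r ≤ 0) {L : ℝ} (hL₀ : 0 ≤ L) (hL : k₀ + 2 ≤ L)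
    (hkL : |k| * L ≤ 1) : fixedPointResidual r k₀ k c L < 0 := by
  have hcos : k * L * cos (c * L) ≤ 1 := by
    calc k * L * cos (c * L) ≤ |k * L * cos (c * L)| := le_abs_self _
      _ = |k| * L * |cos (c * L)| := by rw [abs_mul, abs_mul, abs_of_nonneg hL₀]
      _ ≤ |k| * L := mul_le_of_le_one_right (by positivity) (abs_cos_le_one _)
      _ ≤ 1 := hkL
  have := sq_mul_exp_sub_lt_one hr hL₀
  unfold fixedPointResidual
  linarith

lemma existsUnique_eq_zero (hr : r ≤ 0) (hc₀ : 0 ≤ c) (hc : c < 1 / 4) (hk₀ : 0 ≤ k₀) {L : ℝ}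
    (hL₄ : 4 ≤ L) (hL : k₀ + 2 ≤ L) (hkL : |k| * L ≤ 1) :
    ∃! x, x ∈ Icc 0 L ∧ fixedPointResidual r k₀ k c x = 0 :=
  (strictAntiOn hr hc₀ hc hL₄ hkL).existsUnique_eq_zero_Icc (by linarith)
    (fun x _ => (hasDerivAt x).continuousAt.continuousWithinAt)
    (by rwa [apply_zero])
    (neg_of_add_two_le hr (by linarith) hL hkL).le

end fixedPointResidual

lemma fixedPoint_iff_fixedPointResidual_eq_zero {r k₀ k k₁ k₂ : ℝ} (hk₂ : 1 + k₂ ≠ 0)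
    (p : ℝ × ℝ) :
    (p.1 ^ 2 * exp (r - p.1) + k₀ + k * p.1 * cos (π * p.2), k₁ * p.1 - k₂ * p.2) = p ↔
      p.2 = k₁ * p.1 / (1 + k₂) ∧ fixedPointResidual r k₀ k (π * k₁ / (1 + k₂)) p.1 = 0 := by
  obtain ⟨x, φ⟩ := p
  have hφ : k₁ * x - k₂ * φ = φ ↔ φ = k₁ * x / (1 + k₂) := by
    rw [eq_div_iff hk₂]; constructor <;> intro h <;> linarith
  simp only [Prod.mk.injEq, hφ, fixedPointResidual, sub_eq_zero]
  rw [and_comm]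
  refine and_congr_right fun hφx => ?_
  rw [hφx, show π * (k₁ * x / (1 + k₂)) = π * k₁ / (1 + k₂) * x by ring]

theorem stmt4 (N : ℕ) (hN : 1 < N) (M₁ M₂ r k₀ k k₁ k₂ : ℝ)
    (hM₁ : M₁ = (N : ℝ) + 2) (hM₂ : M₂ = k₁ * M₁ / (1 + k₂))
    (hk₀ : 0 < k₀ ∧ k₀ < N) (hr : r < 0)
    (hk : -1 / M₁ < k ∧ k < 1 / M₁) (hk₁ : 0 < k₁ ∧ k₁ < 1) (hk₂ : k₂ ≥ 4 * π)
    (M : ℝ × ℝ → ℝ × ℝ)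
    (hM : ∀ p : ℝ × ℝ, M p =
      (p.1 ^ 2 * exp (r - p.1) + k₀ + k * p.1 * cos (π * p.2), k₁ * p.1 - k₂ * p.2)) :
    ∃! p : ℝ × ℝ, p ∈ Set.Icc (0 : ℝ) M₁ ×ˢ Set.Icc (0 : ℝ) M₂ ∧ M p = p ∧ 0 < p.1 := by
  have hN₂ : (2 : ℝ) ≤ N := by exact_mod_cast hN
  have hM₁₄ : 4 ≤ M₁ := by rw [hM₁]; linarith
  have hk₂₀ : 0 < 1 + k₂ := by linarith [pi_pos]
  have hkM : |k| * M₁ ≤ 1 := by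
    have := abs_lt.2 ⟨by rw [← neg_div]; exact hk.1, hk.2⟩
    rw [lt_div_iff₀ (by linarith)] at this
    exact this.le
  have hc : π * k₁ / (1 + k₂) < 1 / 4 := by
    rw [div_lt_iff₀ hk₂₀]; nlinarith [pi_pos]
  obtain ⟨x, ⟨hxI, hx⟩, hxuniq⟩ := fixedPointResidual.existsUnique_eq_zero hr.le
    (div_nonneg (mul_nonneg pi_pos.le hk₁.1.le) hk₂₀.le) hc hk₀.1.le hM₁₄
    (by rw [hM₁]; linarith) hkM
  have hxpos : 0 < x := hxI.1.lt_of_ne <| by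
    rintro rfl; rw [fixedPointResidual.apply_zero] at hx; linarith [hk₀.1]
  refine ⟨(x, k₁ * x / (1 + k₂)), ⟨⟨hxI, ?_, ?_⟩, ?_, hxpos⟩, ?_⟩
  · exact div_nonneg (mul_nonneg hk₁.1.le hxI.1) hk₂₀.le
  · rw [hM₂]
    exact div_le_div_of_nonneg_right (mul_le_mul_of_nonneg_left hxI.2 hk₁.1.le) hk₂₀.le
  · rw [hM, fixedPoint_iff_fixedPointResidual_eq_zero hk₂₀.ne']; exact ⟨rfl, hx⟩
  · rintro p ⟨⟨hp, -⟩, hfix, -⟩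
    rw [hM, fixedPoint_iff_fixedPointResidual_eq_zero hk₂₀.ne'] at hfix
    have hp₁ := hxuniq p.1 ⟨hp, hfix.2⟩
    exact Prod.ext hp₁ (hfix.1.trans (by rw [hp₁]))
end
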